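/- Let (X, μ) be a measurable space with μ a nonnegative finite measure. If f_n is a sequence in L¹(X, μ) converging weakly in L¹(X, μ) to f, and g_n is a sequence in L¹(X, μ) converging μ-almost everywhere to g with |g_n| ≤ C for a constant C > 0 independent of n, then ∫_X f g dμ = lim_{n→∞} ∫_X f_n g_n dμ. -/

import Mathlib

/-!
A weakly convergent sequence `fₙ` in `L¹(μ)` is uniformly integrable: it is bounded in `L¹` by the
uniform boundedness principle for the functionals `h ↦ ∫ fₙ h` on `L^∞(μ)`, and its integrals are
uniformly absolutely continuous by the Vitali–Hahn–Saks argument, i.e. Baire category in the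
complete metric space of indicators in `L¹(μ)`. Then in
`∫ fₙ gₙ - ∫ f g = ∫ fₙ (gₙ - g) + (∫ fₙ g - ∫ f g)` the second term tends to `0` by weak
convergence, and truncating `fₙ` at a height `K` bounds the first by
`K ∫ |gₙ - g| + 2 C supₙ ∫_{|fₙ| ≥ K} |fₙ|`, where `∫ |gₙ - g| → 0` by dominated convergence.
-/

open MeasureTheory Filter Topology
open scoped ENNReal NNReal symmDiff

namespace MeasureTheory

variable {X : Type*} [MeasurableSpace X] {μ : Measure X}

lemma Integrable.eLpNorm_one_eq {f : X → ℝ} (hf : Integrable f μ) :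
    eLpNorm f 1 μ = ENNReal.ofReal (∫ x, |f x| ∂μ) := by
  rw [eLpNorm_one_eq_lintegral_enorm, ← ofReal_integral_norm_eq_lintegral_enorm hf]
  rfl

lemma Integrable.eLpNorm_one_indicator_eq {f : X → ℝ} (hf : Integrable f μ) {s : Set X}
    (hs : MeasurableSet s) :
    eLpNorm (s.indicator f) 1 μ = ENNReal.ofReal (∫ x in s, |f x| ∂μ) := by
  rw [eLpNorm_indicator_eq_eLpNorm_restrict hs, hf.restrict.eLpNorm_one_eq]

lemma Integrable.exists_pos_setIntegral_abs_le {f : X → ℝ} (hf : Integrable f μ) {ε : ℝ}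
    (hε : 0 < ε) :
    ∃ δ > 0, ∀ s, MeasurableSet s → μ s ≤ ENNReal.ofReal δ → ∫ x in s, |f x| ∂μ ≤ ε := by
  obtain ⟨δ, hδ, h⟩ :=
    (memLp_one_iff_integrable.2 hf).eLpNorm_indicator_le le_rfl ENNReal.one_ne_top hε
  refine ⟨δ, hδ, fun s hs hμs => ?_⟩
  rw [← ENNReal.ofReal_le_ofReal_iff hε.le, ← hf.eLpNorm_one_indicator_eq hs]
  exact h s hs hμs

lemma integral_mul_indicator_one (f : X → ℝ) {s : Set X} (hs : MeasurableSet s) :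
    ∫ x, f x * s.indicator 1 x ∂μ = ∫ x in s, f x ∂μ := by
  rw [← integral_indicator hs]
  congr 1 with x
  by_cases hx : x ∈ s <;> simp [hx]

lemma setIntegral_eq_setIntegral_union_sub_setIntegral_sdiff {f : X → ℝ} (hf : Integrable f μ)
    (A : Set X) {s : Set X} (hs : MeasurableSet s) :
    ∫ x in s, f x ∂μ = ∫ x in A ∪ s, f x ∂μ - ∫ x in A \ s, f x ∂μ := by
  rw [← Set.sdiff_union_self, setIntegral_union Set.disjoint_sdiff_left hs hf.integrableOn
    hf.integrableOn]
  ring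

lemma abs_setIntegral_sub_setIntegral_le {f : X → ℝ} (hf : Integrable f μ) {s t : Set X}
    (hs : MeasurableSet s) (ht : MeasurableSet t) :
    |∫ x in s, f x ∂μ - ∫ x in t, f x ∂μ| ≤ ∫ x in s ∆ t, |f x| ∂μ := by
  rw [← integral_indicator hs, ← integral_indicator ht,
    ← integral_sub (hf.indicator hs) (hf.indicator ht), ← integral_indicator (hs.symmDiff ht)]
  refine abs_integral_le_integral_abs.trans_eq (congr_arg _ (funext fun x => ?_))
  rw [← Set.apply_indicator_symmDiff (g := abs) abs_neg]
  exact norm_indicator_eq_indicator_norm (f := f) ..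

lemma setIntegral_abs_le_of_forall_abs_setIntegral_le {f : X → ℝ} (hf : Integrable f μ)
    {s : Set X} (hs : MeasurableSet s) {ε : ℝ}
    (h : ∀ t ⊆ s, MeasurableSet t → |∫ x in t, f x ∂μ| ≤ ε) :
    ∫ x in s, |f x| ∂μ ≤ 2 * ε := by
  set P := {x | 0 ≤ hf.1.mk f x}
  have hP : MeasurableSet P :=
    measurableSet_le measurable_const hf.1.stronglyMeasurable_mk.measurable
  have hpos : ∫ x in s ∩ P, |f x| ∂μ = ∫ x in s ∩ P, f x ∂μ := by
    refine setIntegral_congr_ae (hs.inter hP) ?_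
    filter_upwards [hf.1.ae_eq_mk] with x hx hxP
    exact abs_of_nonneg (hx ▸ hxP.2)
  have hneg : ∫ x in s \ P, |f x| ∂μ = -∫ x in s \ P, f x ∂μ := by
    rw [← integral_neg]
    refine setIntegral_congr_ae (hs.diff hP) ?_
    filter_upwards [hf.1.ae_eq_mk] with x hx hxP
    exact abs_of_neg (hx ▸ not_le.1 hxP.2)
  rw [← integral_inter_add_sdiff hP hf.abs.integrableOn, hpos, hneg, two_mul]
  exact add_le_add ((le_abs_self _).trans (h _ Set.inter_subset_left (hs.inter hP)))
    ((neg_le_abs _).trans (h _ Set.sdiff_subset (hs.diff hP)))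

def indicatorsL1 (μ : Measure X) : Set (Lp ℝ 1 μ) := {u | ∀ᵐ x ∂μ, u x = 0 ∨ u x = 1}

lemma indicatorConstLp_mem_indicatorsL1 {s : Set X} (hs : MeasurableSet s) (hμs : μ s ≠ ∞) :
    indicatorConstLp 1 hs hμs (1 : ℝ) ∈ indicatorsL1 μ := by
  filter_upwards [indicatorConstLp_coeFn (p := 1) (hs := hs) (hμs := hμs) (c := (1 : ℝ))]
    with x hx
  by_cases hxs : x ∈ s <;> simp [hx, hxs]

lemma exists_eq_indicatorConstLp_of_mem_indicatorsL1 {u : Lp ℝ 1 μ} (hu : u ∈ indicatorsL1 μ) :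
    ∃ s, ∃ (hs : MeasurableSet s) (hμs : μ s ≠ ∞), u = indicatorConstLp 1 hs hμs (1 : ℝ) := by
  set s := (u : X → ℝ) ⁻¹' {1}
  have hs : MeasurableSet s := (Lp.stronglyMeasurable u).measurable (measurableSet_singleton 1)
  have hμs : μ s ≠ ∞ := by
    refine (lt_of_le_of_lt (measure_mono fun x hx => ?_)
      ((L1.integrable_coeFn u).measure_norm_ge_lt_top one_pos)).ne
    simp_all [s]
  refine ⟨s, hs, hμs, Lp.ext ?_⟩
  filter_upwards [hu, indicatorConstLp_coeFn (p := 1) (hs := hs) (hμs := hμs) (c := (1 : ℝ))]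
    with x hx hx'
  rcases hx with hx | hx <;> simp [hx', s, hx]

lemma isClosed_indicatorsL1 : IsClosed (indicatorsL1 μ) := by
  refine IsSeqClosed.isClosed fun u v hu huv => ?_
  obtain ⟨ns, -, hae⟩ := (tendstoInMeasure_of_tendsto_Lp huv).exists_seq_tendsto_ae
  filter_upwards [hae, ae_all_iff.2 fun j => hu (ns j)] with x hx hux
  exact (Set.toFinite {0, 1}).isClosed.mem_of_tendsto hx (Eventually.of_forall hux)

lemma dist_indicatorConstLp_one {s t : Set X} (hs : MeasurableSet s) (hμs : μ s ≠ ∞)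
    (ht : MeasurableSet t) (hμt : μ t ≠ ∞) :
    dist (indicatorConstLp 1 hs hμs (1 : ℝ)) (indicatorConstLp 1 ht hμt 1) = μ.real (s ∆ t) := by
  rw [dist_indicatorConstLp_eq_norm, norm_indicatorConstLp one_ne_zero ENNReal.one_ne_top]
  simp

lemma integral_mul_indicatorConstLp_one (f : X → ℝ) {s : Set X} (hs : MeasurableSet s)
    (hμs : μ s ≠ ∞) :
    ∫ x, f x * indicatorConstLp 1 hs hμs (1 : ℝ) x ∂μ = ∫ x in s, f x ∂μ := by
  rw [← integral_mul_indicator_one f hs]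
  refine integral_congr_ae ?_
  filter_upwards [indicatorConstLp_coeFn (p := 1) (hs := hs) (hμs := hμs) (c := (1 : ℝ))]
    with x hx
  rw [hx]
  rfl

lemma continuousOn_integral_mul_indicatorsL1 {f : X → ℝ} (hf : Integrable f μ) :
    ContinuousOn (fun u : Lp ℝ 1 μ => ∫ x, f x * u x ∂μ) (indicatorsL1 μ) := by
  rw [Metric.continuousOn_iff]
  intro u hu ε hε
  obtain ⟨δ, hδ, habs⟩ := hf.exists_pos_setIntegral_abs_le (half_pos hε)
  refine ⟨δ, hδ, fun v hv hvu => ?_⟩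
  obtain ⟨s, hs, hμs, rfl⟩ := exists_eq_indicatorConstLp_of_mem_indicatorsL1 hu
  obtain ⟨t, ht, hμt, rfl⟩ := exists_eq_indicatorConstLp_of_mem_indicatorsL1 hv
  rw [dist_indicatorConstLp_one] at hvu
  rw [Real.dist_eq, integral_mul_indicatorConstLp_one, integral_mul_indicatorConstLp_one]
  calc _ ≤ ∫ x in t ∆ s, |f x| ∂μ := abs_setIntegral_sub_setIntegral_le hf ht hs
    _ ≤ ε / 2 := habs _ (ht.symmDiff hs) (ENNReal.le_ofReal_iff_toReal_le
        (measure_symmDiff_ne_top hμt hμs) hδ.le |>.2 hvu.le)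
    _ < ε := half_lt_self hε

/-- The Baire category step of the Vitali–Hahn–Saks theorem. -/
theorem exists_forall_abs_setIntegral_sub_le_of_cauchySeq {fn : ℕ → X → ℝ}
    (hfn : ∀ n, Integrable (fn n) μ)
    (hcauchy : ∀ s, MeasurableSet s → CauchySeq fun n => ∫ x in s, fn n x ∂μ)
    {ε : ℝ} (hε : 0 < ε) :
    ∃ k, ∃ δ > 0, ∀ n ≥ k, ∀ s, MeasurableSet s → μ s ≤ ENNReal.ofReal δ →
      |∫ x in s, fn n x ∂μ - ∫ x in s, fn k x ∂μ| ≤ ε := by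
  have : CompleteSpace (indicatorsL1 μ) := isClosed_indicatorsL1.completeSpace_coe
  have : Nonempty (indicatorsL1 μ) :=
    ⟨⟨_, indicatorConstLp_mem_indicatorsL1 MeasurableSet.empty (by simp)⟩⟩
  let Φ : ℕ → indicatorsL1 μ → ℝ := fun n u => ∫ x, fn n x * (u : Lp ℝ 1 μ) x ∂μ
  have hΦ : ∀ n, Continuous (Φ n) := fun n =>
    (continuousOn_integral_mul_indicatorsL1 (hfn n)).domRestrict
  let F : ℕ → Set (indicatorsL1 μ) := fun k => ⋂ m ≥ k, ⋂ n ≥ k, {u | |Φ m u - Φ n u| ≤ ε / 2}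
  have hF : ∀ k, IsClosed (F k) := fun k =>
    isClosed_biInter fun m _ => isClosed_biInter fun n _ =>
      isClosed_le ((hΦ m).sub (hΦ n)).abs continuous_const
  have hcover : ⋃ k, F k = Set.univ := by
    refine Set.eq_univ_of_forall fun u => ?_
    obtain ⟨s, hs, hμs, hu⟩ := exists_eq_indicatorConstLp_of_mem_indicatorsL1 u.2
    obtain ⟨k, hk⟩ := Metric.cauchySeq_iff.1 (hcauchy s hs) (ε / 2) (half_pos hε)
    refine Set.mem_iUnion.2 ⟨k, Set.mem_iInter₂.2 fun m hm => Set.mem_iInter₂.2 fun n hn => ?_⟩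
    simp only [Set.mem_ofPred_eq, Φ, hu, integral_mul_indicatorConstLp_one]
    exact (hk m hm n hn).le
  obtain ⟨k, u₀, hu₀⟩ := nonempty_interior_of_iUnion_of_closed hF hcover
  obtain ⟨r, hr, hball⟩ := Metric.isOpen_iff.1 isOpen_interior u₀ hu₀
  obtain ⟨A, hA, hμA, hu₀A⟩ := exists_eq_indicatorConstLp_of_mem_indicatorsL1 u₀.2
  refine ⟨k, r / 2, half_pos hr, fun n hn s hs hμs => ?_⟩
  have hμs' : μ s ≠ ∞ := ne_top_of_le_ne_top ENNReal.ofReal_ne_top hμs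
  -- a set differing from `A` only inside `s` gives a point of the ball, hence of `F k`
  have near : ∀ B (hB : MeasurableSet B) (hμB : μ B ≠ ∞), B ∆ A ⊆ s →
      |∫ x in B, fn n x ∂μ - ∫ x in B, fn k x ∂μ| ≤ ε / 2 := by
    intro B hB hμB hBA
    let v : indicatorsL1 μ := ⟨_, indicatorConstLp_mem_indicatorsL1 hB hμB⟩
    have hv : v ∈ F k := interior_subset <| hball <| by
      rw [Metric.mem_ball, Subtype.dist_eq, hu₀A, dist_indicatorConstLp_one]
      calc μ.real (B ∆ A) ≤ μ.real s := measureReal_mono hBA hμs'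
        _ ≤ r / 2 := (ENNReal.le_ofReal_iff_toReal_le hμs' (half_pos hr).le).1 hμs
        _ < r := half_lt_self hr
    have := Set.mem_iInter₂.1 (Set.mem_iInter₂.1 hv n hn) k le_rfl
    simpa only [Set.mem_ofPred_eq, Φ, v, integral_mul_indicatorConstLp_one] using this
  have h₁ := near (A ∪ s) (hA.union hs) (measure_union_ne_top hμA hμs') (by
    intro x; simp only [Set.mem_symmDiff, Set.mem_union]; tauto)
  have h₂ := near (A \ s) (hA.diff hs) (ne_top_of_le_ne_top hμA (measure_mono Set.sdiff_subset))
    (by intro x; simp only [Set.mem_symmDiff, Set.mem_sdiff]; tauto)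
  rw [setIntegral_eq_setIntegral_union_sub_setIntegral_sdiff (hfn n) A hs,
    setIntegral_eq_setIntegral_union_sub_setIntegral_sdiff (hfn k) A hs]
  calc _ = |(∫ x in A ∪ s, fn n x ∂μ - ∫ x in A ∪ s, fn k x ∂μ)
        - (∫ x in A \ s, fn n x ∂μ - ∫ x in A \ s, fn k x ∂μ)| := by ring_nf
    _ ≤ ε / 2 + ε / 2 := (abs_sub _ _).trans (add_le_add h₁ h₂)
    _ = ε := add_halves ε

theorem unifIntegrable_of_tail {β : Type*} [NormedAddCommGroup β] {p : ℝ≥0∞}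
    (hp : 1 ≤ p) (hp' : p ≠ ∞) {f : ℕ → X → β} (hf : ∀ n, MemLp (f n) p μ)
    (h : ∀ ε > 0, ∃ k, ∃ δ > 0, ∀ n ≥ k, ∀ s, MeasurableSet s → μ s ≤ ENNReal.ofReal δ →
      eLpNorm (s.indicator (f n)) p μ ≤ ENNReal.ofReal ε) :
    UnifIntegrable f p μ := by
  intro ε hε
  obtain ⟨k, δ₁, hδ₁, htail⟩ := h ε hε
  obtain ⟨δ₂, hδ₂, hinit⟩ :=
    unifIntegrable_finite hp hp' (f := fun j : Fin k => f j) (fun j => hf j) hε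
  refine ⟨min δ₁ δ₂, lt_min hδ₁ hδ₂, fun n s hs hμs => ?_⟩
  rcases le_or_gt k n with hkn | hnk
  · exact htail n hkn s hs (hμs.trans (ENNReal.ofReal_le_ofReal (min_le_left _ _)))
  · exact hinit ⟨n, hnk⟩ s hs (hμs.trans (ENNReal.ofReal_le_ofReal (min_le_right _ _)))

/-- The **Vitali–Hahn–Saks theorem**, in its uniform integrability form. -/
theorem unifIntegrable_of_cauchySeq_setIntegral {fn : ℕ → X → ℝ} (hfn : ∀ n, Integrable (fn n) μ)
    (hcauchy : ∀ s, MeasurableSet s → CauchySeq fun n => ∫ x in s, fn n x ∂μ) :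
    UnifIntegrable fn 1 μ := by
  refine unifIntegrable_of_tail le_rfl ENNReal.one_ne_top
    (fun n => memLp_one_iff_integrable.2 (hfn n)) fun ε hε => ?_
  obtain ⟨k, δ₁, hδ₁, htail⟩ :=
    exists_forall_abs_setIntegral_sub_le_of_cauchySeq hfn hcauchy (by positivity : 0 < ε / 4)
  obtain ⟨δ₂, hδ₂, hk⟩ := (memLp_one_iff_integrable.2 (hfn k)).eLpNorm_indicator_le le_rfl
    ENNReal.one_ne_top (half_pos hε)
  refine ⟨k, min δ₁ δ₂, lt_min hδ₁ hδ₂, fun n hn s hs hμs => ?_⟩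
  have hdiff : ∫ x in s, |fn n x - fn k x| ∂μ ≤ 2 * (ε / 4) := by
    refine setIntegral_abs_le_of_forall_abs_setIntegral_le ((hfn n).sub (hfn k)) hs
      fun t hts ht => ?_
    simp only [Pi.sub_apply]
    rw [integral_sub (hfn n).integrableOn (hfn k).integrableOn]
    exact htail n hn t ht ((measure_mono hts).trans
      (hμs.trans (ENNReal.ofReal_le_ofReal (min_le_left _ _))))
  have hsum : s.indicator (fn n) = s.indicator (fn n - fn k) + s.indicator (fn k) := by
    rw [← Set.indicator_add', sub_add_cancel]
  calc eLpNorm (s.indicator (fn n)) 1 μ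
      ≤ eLpNorm (s.indicator (fn n - fn k)) 1 μ + eLpNorm (s.indicator (fn k)) 1 μ := by
        rw [hsum]
        exact eLpNorm_add_le (((hfn n).sub (hfn k)).1.indicator hs) ((hfn k).1.indicator hs) le_rfl
    _ ≤ ENNReal.ofReal (ε / 2) + ENNReal.ofReal (ε / 2) := by
        gcongr
        · rw [((hfn n).sub (hfn k)).eLpNorm_one_indicator_eq hs]
          exact ENNReal.ofReal_le_ofReal (hdiff.trans_eq (by ring))
        · exact hk s hs (hμs.trans (ENNReal.ofReal_le_ofReal (min_le_right _ _)))
    _ = ENNReal.ofReal ε := by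
        rw [← ENNReal.ofReal_add (half_pos hε).le (half_pos hε).le, add_halves]

lemma norm_le_norm_lpPairing (F : Lp ℝ 1 μ) :
    ‖F‖ ≤ ‖ContinuousLinearMap.lpPairing μ 1 ∞ (ContinuousLinearMap.mul ℝ ℝ) F‖ := by
  set Λ := ContinuousLinearMap.lpPairing μ 1 ∞ (ContinuousLinearMap.mul ℝ ℝ) F
  set σ : X → ℝ := fun x => if 0 ≤ F x then 1 else -1
  have hσ_bound : ∀ x, ‖σ x‖ ≤ 1 := fun x => by
    by_cases h : 0 ≤ F x <;> simp [σ, h]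
  have hσ : MemLp σ ∞ μ := memLp_top_of_bound
    (Measurable.ite (measurableSet_le measurable_const (Lp.stronglyMeasurable F).measurable)
      measurable_const measurable_const).aestronglyMeasurable 1 (Eventually.of_forall hσ_bound)
  have hσ_norm : ‖hσ.toLp σ‖ ≤ 1 := by
    rw [Lp.norm_toLp, eLpNorm_exponent_top]
    exact ENNReal.toReal_le_of_le_ofReal zero_le_one
      (eLpNormEssSup_le_of_ae_bound (Eventually.of_forall hσ_bound))
  have hpair : Λ (hσ.toLp σ) = ‖F‖ := by
    rw [ContinuousLinearMap.lpPairing_eq_integral, L1.norm_eq_integral_norm]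
    refine integral_congr_ae ?_
    filter_upwards [hσ.coeFn_toLp] with x hx
    rw [ContinuousLinearMap.mul_apply', hx, Real.norm_eq_abs]
    by_cases h : 0 ≤ F x
    · simp [σ, h, abs_of_nonneg h]
    · simp [σ, h, abs_of_neg (not_le.1 h)]
  calc ‖F‖ = Λ (hσ.toLp σ) := hpair.symm
    _ ≤ ‖Λ (hσ.toLp σ)‖ := le_abs_self _
    _ ≤ ‖Λ‖ * ‖hσ.toLp σ‖ := Λ.le_opNorm _
    _ ≤ ‖Λ‖ := mul_le_of_le_one_right (norm_nonneg _) hσ_norm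

theorem exists_integral_abs_le_of_forall_abs_integral_mul_le {ι : Type*} {fn : ι → X → ℝ}
    (hfn : ∀ i, Integrable (fn i) μ)
    (hbdd : ∀ g : Lp ℝ ∞ μ, ∃ c, ∀ i, |∫ x, fn i x * g x ∂μ| ≤ c) :
    ∃ C, ∀ i, ∫ x, |fn i x| ∂μ ≤ C := by
  have hpair : ∀ i (g : Lp ℝ ∞ μ), ContinuousLinearMap.lpPairing μ 1 ∞
      (ContinuousLinearMap.mul ℝ ℝ) ((hfn i).toL1 (fn i)) g = ∫ x, fn i x * g x ∂μ := by
    intro i g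
    rw [ContinuousLinearMap.lpPairing_eq_integral]
    refine integral_congr_ae ?_
    filter_upwards [(hfn i).coeFn_toL1] with x hx
    rw [ContinuousLinearMap.mul_apply', hx]
  obtain ⟨C, hC⟩ := banach_steinhaus (g := fun i => ContinuousLinearMap.lpPairing μ 1 ∞
      (ContinuousLinearMap.mul ℝ ℝ) ((hfn i).toL1 (fn i))) fun g => by
    obtain ⟨c, hc⟩ := hbdd g
    exact ⟨c, fun i => by simpa only [hpair, Real.norm_eq_abs] using hc i⟩
  refine ⟨C, fun i => ?_⟩
  calc ∫ x, |fn i x| ∂μ = ‖(hfn i).toL1 (fn i)‖ := (L1.norm_of_fun_eq_integral_norm (hfn i)).symm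
    _ ≤ C := (norm_le_norm_lpPairing _).trans (hC i)

lemma tendsto_integral_mul_of_ae_abs_le {ι : Type*} {l : Filter ι} {fn : ι → X → ℝ} {f : X → ℝ}
    (hweak : ∀ h : X → ℝ, Measurable h → (∃ B : ℝ, ∀ x, |h x| ≤ B) →
      Tendsto (fun i => ∫ x, fn i x * h x ∂μ) l (𝓝 (∫ x, f x * h x ∂μ)))
    {h : X → ℝ} (hh : AEStronglyMeasurable h μ) {B : ℝ} (hB : ∀ᵐ x ∂μ, |h x| ≤ B) :
    Tendsto (fun i => ∫ x, fn i x * h x ∂μ) l (𝓝 (∫ x, f x * h x ∂μ)) := by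
  set h' : X → ℝ := fun x => max (-|B|) (min |B| (hh.mk h x))
  have hh'_meas : Measurable h' :=
    measurable_const.max (measurable_const.min hh.stronglyMeasurable_mk.measurable)
  have hh'_bound : ∀ x, |h' x| ≤ |B| := fun x =>
    abs_le.2 ⟨le_max_left _ _, max_le (neg_le_self (abs_nonneg B)) (min_le_left _ _)⟩
  have hhh' : h =ᵐ[μ] h' := by
    filter_upwards [hh.ae_eq_mk, hB] with x hx hxB
    obtain ⟨hlo, hhi⟩ := abs_le.1 (hxB.trans (le_abs_self B))
    simp only [h', ← hx, min_eq_right hhi, max_eq_right hlo]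
  have hcongr : ∀ φ : X → ℝ, ∫ x, φ x * h x ∂μ = ∫ x, φ x * h' x ∂μ := fun φ =>
    integral_congr_ae (hhh'.mono fun x hx => congrArg (φ x * ·) hx)
  simpa only [hcongr] using hweak h' hh'_meas ⟨|B|, hh'_bound⟩

/-- One direction of the **Dunford–Pettis theorem**, for weakly convergent sequences. -/
theorem uniformIntegrable_of_tendsto_integral_mul {fn : ℕ → X → ℝ} {f : X → ℝ}
    (hfn : ∀ n, Integrable (fn n) μ)
    (hweak : ∀ h : X → ℝ, Measurable h → (∃ B : ℝ, ∀ x, |h x| ≤ B) →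
      Tendsto (fun n => ∫ x, fn n x * h x ∂μ) atTop (𝓝 (∫ x, f x * h x ∂μ))) :
    UniformIntegrable fn 1 μ := by
  refine ⟨fun n => (hfn n).1, unifIntegrable_of_cauchySeq_setIntegral hfn fun s hs => ?_, ?_⟩
  · have hind := hweak _ (measurable_one.indicator hs)
      ⟨1, fun x => by by_cases hx : x ∈ s <;> simp [hx]⟩
    simp only [integral_mul_indicator_one _ hs] at hind
    exact hind.cauchySeq
  · obtain ⟨C, hC⟩ := exists_integral_abs_le_of_forall_abs_integral_mul_le hfn fun g => by
      obtain ⟨c, hc⟩ := (tendsto_integral_mul_of_ae_abs_le hweak (Lp.aestronglyMeasurable g)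
        (ae_le_lpNorm_exponent_top (Lp.memLp g))).abs.bddAbove_range
      exact ⟨c, fun n => hc ⟨n, rfl⟩⟩
    exact ⟨C.toNNReal, fun n => (hfn n).eLpNorm_one_eq ▸ ENNReal.ofReal_le_ofReal (hC n)⟩

lemma integral_abs_mul_le {f u : X → ℝ} (hf : Integrable f μ) (hu : Integrable u μ) {C : ℝ}
    (hC : ∀ᵐ x ∂μ, |u x| ≤ C) (K : ℝ≥0) :
    ∫ x, |f x * u x| ∂μ ≤
      K * ∫ x, |u x| ∂μ + |C| * (eLpNorm ({x | K ≤ ‖f x‖₊}.indicator f) 1 μ).toReal := by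
  set T := {x | K ≤ ‖f x‖₊}
  have hT_meas : AEStronglyMeasurable (T.indicator f) μ :=
    hf.1.indicator₀ (nullMeasurableSet_le aemeasurable_const hf.1.aemeasurable.nnnorm)
  have hT_int : Integrable (T.indicator f) μ :=
    hf.mono hT_meas (Eventually.of_forall fun x => norm_indicator_le_norm_self _ _)
  have hpt : ∀ᵐ x ∂μ, |f x * u x| ≤ K * |u x| + |C| * |T.indicator f x| := by
    filter_upwards [hC] with x hx
    rw [abs_mul]
    by_cases hxT : x ∈ T
    · rw [Set.indicator_of_mem hxT]
      nlinarith [abs_nonneg (f x), abs_nonneg (u x), le_abs_self C, K.coe_nonneg]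
    · have : |f x| ≤ K := (not_le.1 hxT).le
      rw [Set.indicator_of_notMem hxT, abs_zero, mul_zero, add_zero]
      exact mul_le_mul_of_nonneg_right this (abs_nonneg _)
  calc ∫ x, |f x * u x| ∂μ ≤ ∫ x, (K * |u x| + |C| * |T.indicator f x|) ∂μ :=
        integral_mono_of_nonneg (Eventually.of_forall fun x => abs_nonneg _)
          ((hu.abs.const_mul _).add (hT_int.abs.const_mul _)) hpt
    _ = K * ∫ x, |u x| ∂μ + |C| * ∫ x, |T.indicator f x| ∂μ := by
        rw [integral_add (hu.abs.const_mul _) (hT_int.abs.const_mul _), integral_const_mul,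
          integral_const_mul]
    _ = K * ∫ x, |u x| ∂μ + |C| * (eLpNorm (T.indicator f) 1 μ).toReal := by
        rw [hT_int.eLpNorm_one_eq, ENNReal.toReal_ofReal (integral_nonneg fun x => abs_nonneg _)]

theorem UniformIntegrable.tendsto_integral_mul {ι : Type*} {l : Filter ι} {fn un : ι → X → ℝ}
    (hfn : UniformIntegrable fn 1 μ) (hun : ∀ i, Integrable (un i) μ) {C : ℝ}
    (hC : ∀ i, ∀ᵐ x ∂μ, |un i x| ≤ C) (hlim : Tendsto (fun i => ∫ x, |un i x| ∂μ) l (𝓝 0)) :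
    Tendsto (fun i => ∫ x, fn i x * un i x ∂μ) l (𝓝 0) := by
  rw [Metric.tendsto_nhds]
  intro ε hε
  set η := ε / (2 * (|C| + 1))
  have hη : 0 < η := by positivity
  have hCη : |C| * η < ε / 2 := calc
    |C| * η < (|C| + 1) * η := mul_lt_mul_of_pos_right (lt_add_one _) hη
    _ = ε / 2 := by simp only [η]; field_simp
  obtain ⟨K, hK⟩ := hfn.spec one_ne_zero ENNReal.one_ne_top hη
  filter_upwards [(hlim.const_mul (K : ℝ)).eventually
    (gt_mem_nhds (show (K : ℝ) * 0 < ε / 2 by simpa using half_pos hε))] with i hi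
  have htrunc := integral_abs_mul_le (memLp_one_iff_integrable.1 (hfn.memLp i)) (hun i) (hC i) K
  have htail := ENNReal.toReal_le_of_le_ofReal hη.le (hK i)
  rw [Real.dist_eq, sub_zero]
  calc |∫ x, fn i x * un i x ∂μ| ≤ ∫ x, |fn i x * un i x| ∂μ := abs_integral_le_integral_abs
    _ < ε := by nlinarith [abs_nonneg C]

end MeasureTheory

theorem stmt0_general {X : Type*} [MeasurableSpace X] (μ : Measure X) [IsFiniteMeasure μ]
    (f : X → ℝ) (fn : ℕ → X → ℝ) (g : X → ℝ) (gn : ℕ → X → ℝ) (C : ℝ)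
    (hfn : ∀ n, Integrable (fn n) μ)
    (hgn : ∀ n, Integrable (gn n) μ)
    (hweak : ∀ h : X → ℝ, Measurable h → (∃ B : ℝ, ∀ x, |h x| ≤ B) →
      Tendsto (fun n => ∫ x, fn n x * h x ∂μ) atTop (𝓝 (∫ x, f x * h x ∂μ)))
    (hae : ∀ᵐ x ∂μ, Tendsto (fun n => gn n x) atTop (𝓝 (g x)))
    (hbd : ∀ n, ∀ x, |gn n x| ≤ C) :
    Tendsto (fun n => ∫ x, fn n x * gn n x ∂μ) atTop (𝓝 (∫ x, f x * g x ∂μ)) := by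
  have hg : AEStronglyMeasurable g μ :=
    aestronglyMeasurable_of_tendsto_ae atTop (fun n => (hgn n).1) hae
  have hgC : ∀ᵐ x ∂μ, |g x| ≤ C := hae.mono fun x hx => le_of_tendsto' hx.abs fun n => hbd n x
  have hdiff_bd : ∀ n, ∀ᵐ x ∂μ, |gn n x - g x| ≤ 2 * C := fun n =>
    hgC.mono fun x hx => (abs_sub _ _).trans (by linarith [hbd n x])
  have hdiff : ∀ n, Integrable (fun x => gn n x - g x) μ := fun n =>
    (hgn n).sub ((integrable_const C).mono' hg hgC)
  have hL1 : Tendsto (fun n => ∫ x, |gn n x - g x| ∂μ) atTop (𝓝 0) := by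
    simpa using tendsto_integral_of_dominated_convergence (f := fun _ => 0) (fun _ => 2 * C)
      (fun n => (hdiff n).abs.1) (integrable_const _)
      (fun n => (hdiff_bd n).mono fun x hx => by rwa [Real.norm_eq_abs, abs_abs])
      (hae.mono fun x hx => by simpa using (hx.sub_const (g x)).abs)
  have hsplit : ∀ n, ∫ x, fn n x * gn n x ∂μ =
      ∫ x, fn n x * (gn n x - g x) ∂μ + ∫ x, fn n x * g x ∂μ := by
    intro n
    rw [← integral_add ((hfn n).mul_bdd (hdiff n).1 (hdiff_bd n)) ((hfn n).mul_bdd hg hgC)]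
    simp only [mul_sub, sub_add_cancel]
  simpa [hsplit] using ((uniformIntegrable_of_tendsto_integral_mul hfn hweak).tendsto_integral_mul
    hdiff hdiff_bd hL1).add (tendsto_integral_mul_of_ae_abs_le hweak hg hgC)

/-- If `fₙ ⇀ f` weakly in `L¹(X,μ)` (μ finite) and `gₙ → g` μ-a.e. with
`|gₙ| ≤ C` uniformly, then `∫ f g dμ = lim ∫ fₙ gₙ dμ`. -/
theorem stmt0 {X : Type*} [MeasurableSpace X] (μ : Measure X) [IsFiniteMeasure μ]
    (f : X → ℝ) (fn : ℕ → X → ℝ) (g : X → ℝ) (gn : ℕ → X → ℝ) (C : ℝ) (hC : 0 < C)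
    (hf : Integrable f μ) (hfn : ∀ n, Integrable (fn n) μ)
    (hgn : ∀ n, Integrable (gn n) μ)
    (hweak : ∀ h : X → ℝ, Measurable h → (∃ B : ℝ, ∀ x, |h x| ≤ B) →
      Tendsto (fun n => ∫ x, fn n x * h x ∂μ) atTop (𝓝 (∫ x, f x * h x ∂μ)))
    (hae : ∀ᵐ x ∂μ, Tendsto (fun n => gn n x) atTop (𝓝 (g x)))
    (hbd : ∀ n, ∀ x, |gn n x| ≤ C) :
    Tendsto (fun n => ∫ x, fn n x * gn n x ∂μ) atTop (𝓝 (∫ x, f x * g x ∂μ)) :=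
  stmt0_general μ f fn g gn C hfn hgn hweak hae hbd
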